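/- Let n ≥ 4 and let W ⊆ V(H_n) be a set satisfying: (a) W contains at most one vertex from each column C_i; (b) if n is odd, W does not contain n−1 or more vertices of any single row (up to the row symmetry sending R_0 to itself); and (c) if n is even, the subgraph of H_n induced on W minus any fixed row does not contain a path on n vertices. Then there exists a set Z with W ⊆ Z ⊆ V(H_n) such that Z contains exactly one vertex from each column C_i and Z still satisfies conditions (a)–(c). -/

import Mathlib

/-- Replicating a set `W` of vertices of `G`: each `w ∈ W` gets a clone (the
corresponding element of `Sum.inr`) adjacent to `w` and to all its neighbours. -/
def SimpleGraph.replicateSet {V : Type} (G : SimpleGraph V) (W : Set V) :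
    SimpleGraph (V ⊕ W) where
  Adj x y :=
    match x, y with
    | Sum.inl a, Sum.inl b => G.Adj a b
    | Sum.inl a, Sum.inr b => G.Adj a (b : V) ∨ a = (b : V)
    | Sum.inr a, Sum.inl b => G.Adj (a : V) b ∨ (a : V) = b
    | Sum.inr a, Sum.inr b => G.Adj (a : V) (b : V)
  symm := by
    constructor; rintro (a | a) (b | b) h <;> simp only at h ⊢ <;>
      first
        | exact G.adj_symm h
        | (rcases h with h | h
           · exact Or.inl (G.adj_symm h)
           · exact Or.inr h.symm)
  loopless := by
    constructor; rintro (a | a) h <;> simp only at h <;> exact G.loopless.irrefl _ h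

/-- Gallai's graph `H n`: the Cartesian product of the path on `Fin n` with the
triangle on `ZMod 3`, together with the three twist edges joining `(0, j)` to
`(n-1, -j)`. -/
def Hgraph (n : ℕ) : SimpleGraph (Fin n × ZMod 3) :=
  SimpleGraph.fromRel (fun x y =>
    (x.1 = y.1 ∧ x.2 ≠ y.2) ∨
    ((x.1 : ℕ) + 1 = (y.1 : ℕ) ∧ x.2 = y.2) ∨
    ((x.1 : ℕ) = 0 ∧ (y.1 : ℕ) = n - 1 ∧ y.2 = -x.2))

/-- `G` is `k`-critical: `χ(G) = k` and deleting any vertex leaves a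
`(k-1)`-colourable graph. -/
def SimpleGraph.IsCrit {V : Type} (G : SimpleGraph V) (k : ℕ) : Prop :=
  G.chromaticNumber = k ∧
    ∀ v : V, (SimpleGraph.induce {u | u ≠ v} G).Colorable (k - 1)

/-- The induced subgraph of `H n` on `S` contains a path with `m` vertices. -/
def hasPathOn (n : ℕ) (S : Set (Fin n × ZMod 3)) (m : ℕ) : Prop :=
  ∃ f : Fin m → Fin n × ZMod 3, Function.Injective f ∧ (∀ k, f k ∈ S) ∧
    ∀ (k : ℕ) (h : k + 1 < m),
      (Hgraph n).Adj (f ⟨k, Nat.lt_of_succ_lt h⟩) (f ⟨k + 1, h⟩)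

/-- Condition (a): some column contains at least two vertices of `W`. -/
def condA (n : ℕ) (W : Set (Fin n × ZMod 3)) : Prop :=
  ∃ i : Fin n, 2 ≤ (W ∩ {v | v.1 = i}).ncard

/-- Condition (b): `n` is odd and `W` contains at least `n - 1` vertices of the
row `R₀`. -/
def condB (n : ℕ) (W : Set (Fin n × ZMod 3)) : Prop :=
  Odd n ∧ n - 1 ≤ (W ∩ {v | v.2 = 0}).ncard

/-- Condition (c): `n` is even and the induced subgraph of `H n` on `W - R₀`
contains a path with at least `n` vertices. -/
def condC (n : ℕ) (W : Set (Fin n × ZMod 3)) : Prop :=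
  Even n ∧ ∃ m : ℕ, n ≤ m ∧ hasPathOn n (W \ {v | v.2 = 0}) m

/-! If `W` already meets every column, take `Z = W`. Otherwise fill the empty columns with
row `1`, except that one empty column `i₀` gets `(i₀, 0)` when `W` misses `R₀`. Then `Z` meets
`R₀`, so `Z - R₀` has fewer than `n` vertices and carries no path on `n` vertices; and `Z ∩ R₀`
is either `W ∩ R₀` or a single vertex, which is too few for (b). -/

open Set

section Transversal

variable {n : ℕ}

def transversal (g : Fin n → ZMod 3) : Set (Fin n × ZMod 3) := {v | v.2 = g v.1}

theorem transversal_inter_column (g : Fin n → ZMod 3) (i : Fin n) :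
    transversal g ∩ {v | v.1 = i} = {(i, g i)} := by
  ext ⟨a, b⟩
  simp only [transversal, mem_inter_iff, mem_ofPred_eq, mem_singleton_iff, Prod.mk.injEq]
  grind

theorem ncard_transversal_inter_column (g : Fin n → ZMod 3) (i : Fin n) :
    (transversal g ∩ {v | v.1 = i}).ncard = 1 := by
  rw [transversal_inter_column, ncard_singleton]

theorem not_condA_transversal (g : Fin n → ZMod 3) : ¬ condA n (transversal g) := by
  rintro ⟨i, hi⟩
  rw [ncard_transversal_inter_column] at hi
  omega

theorem injOn_fst_of_not_condA {W : Set (Fin n × ZMod 3)} (ha : ¬ condA n W) :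
    InjOn Prod.fst W := by
  intro v hv w hw hvw
  have hcol : (W ∩ {u | u.1 = v.1}).ncard ≤ 1 := by
    by_contra h
    exact ha ⟨v.1, by omega⟩
  exact (ncard_le_one (toFinite _)).mp hcol v ⟨hv, rfl⟩ w ⟨hw, hvw.symm⟩

theorem le_ncard_of_hasPathOn {S : Set (Fin n × ZMod 3)} {m : ℕ} (h : hasPathOn n S m) :
    m ≤ S.ncard := by
  obtain ⟨f, hf, hfS, -⟩ := h
  calc m = (range f).ncard := by rw [ncard_range_of_injective hf, Nat.card_fin]
    _ ≤ S.ncard := ncard_le_ncard (range_subset_iff.mpr hfS)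

theorem not_condC_transversal {g : Fin n → ZMod 3} {i : Fin n} (hi : g i = 0) :
    ¬ condC n (transversal g) := by
  rintro ⟨-, m, hnm, hpath⟩
  have hoff : (transversal g \ {v | v.2 = 0}).ncard ≤ (univ \ {i}).ncard := by
    refine ncard_le_ncard_of_injOn Prod.fst ?_ ?_ (toFinite _)
    · rintro v ⟨hv, hv0⟩
      refine ⟨mem_univ _, fun hvi => hv0 ?_⟩
      rw [mem_ofPred_eq, hv, show v.1 = i from hvi, hi]
    · rintro v ⟨hv, -⟩ w ⟨hw, -⟩ hvw
      exact Prod.ext hvw (by rw [hv, hw, hvw])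
  rw [ncard_sdiff_singleton_of_mem (mem_univ i), ncard_univ, Nat.card_fin] at hoff
  have := le_ncard_of_hasPathOn hpath
  have := i.pos
  omega

end Transversal

section Extension

variable {n : ℕ} {W : Set (Fin n × ZMod 3)}

noncomputable def extendRows (W : Set (Fin n × ZMod 3)) (d : Fin n → ZMod 3) (i : Fin n) :
    ZMod 3 :=
  open Classical in if h : ∃ j, (i, j) ∈ W then h.choose else d i

theorem subset_transversal_extendRows (hW : InjOn Prod.fst W) (d : Fin n → ZMod 3) :
    W ⊆ transversal (extendRows W d) := by
  intro w hw
  have h : ∃ j, (w.1, j) ∈ W := ⟨w.2, hw⟩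
  have hmem : (w.1, h.choose) ∈ W := h.choose_spec
  simp only [transversal, extendRows, mem_ofPred_eq, dif_pos h]
  exact congrArg Prod.snd (hW hw hmem rfl)

theorem mem_transversal_extendRows {d : Fin n → ZMod 3} {v : Fin n × ZMod 3}
    (hv : v ∈ transversal (extendRows W d)) :
    v ∈ W ∨ (∀ j, (v.1, j) ∉ W) ∧ v.2 = d v.1 := by
  simp only [transversal, extendRows, mem_ofPred_eq] at hv
  split_ifs at hv with h
  · left
    have hmem := h.choose_spec
    rwa [← hv] at hmem
  · push Not at h
    exact Or.inr ⟨h, hv⟩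

theorem transversal_extendRows_eq (hW : InjOn Prod.fst W) (hfull : ∀ i, ∃ j, (i, j) ∈ W)
    (d : Fin n → ZMod 3) : transversal (extendRows W d) = W := by
  refine (subset_transversal_extendRows hW d).antisymm' fun v hv => ?_
  rcases mem_transversal_extendRows hv with hvW | ⟨hempty, -⟩
  · exact hvW
  · obtain ⟨j, hj⟩ := hfull v.1
    exact absurd hj (hempty j)

theorem extendRows_of_column_empty {d : Fin n → ZMod 3} {i : Fin n} (hi : ∀ j, (i, j) ∉ W) :
    extendRows W d i = d i := by
  have hmem : (i, extendRows W d i) ∈ transversal (extendRows W d) := rfl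
  rcases mem_transversal_extendRows hmem with h | ⟨-, h⟩
  · exact absurd h (hi _)
  · exact h

end Extension

theorem not_condB_of_row_subset {n : ℕ} {W Z : Set (Fin n × ZMod 3)} (hb : ¬ condB n W)
    (hZW : Z ∩ {v | v.2 = 0} ⊆ W ∩ {v | v.2 = 0}) : ¬ condB n Z :=
  fun ⟨hodd, hZ⟩ => hb ⟨hodd, hZ.trans (ncard_le_ncard hZW)⟩

/-- For `n = 1` condition (b) holds for every set, so `¬ condB` forces `n ≠ 1`. -/
theorem not_condB_of_ncard_row_le_one {n : ℕ} {W Z : Set (Fin n × ZMod 3)} (hb : ¬ condB n W)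
    (hZ : (Z ∩ {v | v.2 = 0}).ncard ≤ 1) : ¬ condB n Z := by
  rintro ⟨⟨k, rfl⟩, hk⟩
  obtain rfl : k = 0 := by omega
  exact hb ⟨odd_one, by simp⟩

theorem exists_transversal_of_column_empty {n : ℕ} {W : Set (Fin n × ZMod 3)}
    (hW : InjOn Prod.fst W) (hb : ¬ condB n W) {i₀ : Fin n} (hi₀ : ∀ j, (i₀, j) ∉ W) :
    ∃ g : Fin n → ZMod 3, W ⊆ transversal g ∧ (∃ i, g i = 0) ∧ ¬ condB n (transversal g) := by
  by_cases hR₀ : ∃ w ∈ W, w.2 = 0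
  · obtain ⟨w, hw, hw0⟩ := hR₀
    have hWg := subset_transversal_extendRows hW 1
    refine ⟨extendRows W 1, hWg, ⟨w.1, (hWg hw).symm.trans hw0⟩,
      not_condB_of_row_subset hb fun v ⟨hv, hv0⟩ => ⟨?_, hv0⟩⟩
    rcases mem_transversal_extendRows hv with hvW | ⟨-, hv1⟩
    · exact hvW
    · have h01 : (0 : ZMod 3) = 1 := hv0.symm.trans hv1
      exact absurd h01 (by decide)
  · push Not at hR₀
    set d : Fin n → ZMod 3 := fun i => if i = i₀ then 0 else 1
    refine ⟨extendRows W d, subset_transversal_extendRows hW d,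
      ⟨i₀, by rw [extendRows_of_column_empty hi₀]; simp [d]⟩,
      not_condB_of_ncard_row_le_one hb ?_⟩
    have hrow : transversal (extendRows W d) ∩ {v | v.2 = 0} ⊆ {(i₀, 0)} := by
      rintro v ⟨hv, hv0⟩
      rcases mem_transversal_extendRows hv with hvW | ⟨-, hvd⟩
      · exact absurd hv0 (hR₀ v hvW)
      · rw [mem_ofPred_eq] at hv0
        have hvi₀ : v.1 = i₀ := by
          by_contra hne
          simp [d, hne, hv0] at hvd
        exact Prod.ext hvi₀ hv0
    exact (ncard_le_ncard hrow).trans (ncard_singleton _).le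

theorem extend_to_full_transversal_general (n : ℕ)
    (W : Set (Fin n × ZMod 3))
    (ha : ¬ condA n W) (hb : ¬ condB n W) (hc : ¬ condC n W) :
    ∃ Z : Set (Fin n × ZMod 3), W ⊆ Z ∧
      (∀ i : Fin n, (Z ∩ {v | v.1 = i}).ncard = 1) ∧
      ¬ condA n Z ∧ ¬ condB n Z ∧ ¬ condC n Z := by
  have hW := injOn_fst_of_not_condA ha
  by_cases hfull : ∀ i, ∃ j, (i, j) ∈ W
  · refine ⟨W, subset_rfl, ?_, ha, hb, hc⟩
    rw [← transversal_extendRows_eq hW hfull 0]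
    exact ncard_transversal_inter_column _
  · push Not at hfull
    obtain ⟨i₀, hi₀⟩ := hfull
    obtain ⟨g, hWg, ⟨i, hi⟩, hbg⟩ := exists_transversal_of_column_empty hW hb hi₀
    exact ⟨transversal g, hWg, ncard_transversal_inter_column g, not_condA_transversal g, hbg,
      not_condC_transversal hi⟩

/-- If `W` satisfies none of the conditions (a)–(c), it extends to a set `Z`
containing exactly one vertex from each column and still satisfying none of
(a)–(c). -/
theorem extend_to_full_transversal (n : ℕ) (hn : 4 ≤ n)
    (W : Set (Fin n × ZMod 3))
    (ha : ¬ condA n W) (hb : ¬ condB n W) (hc : ¬ condC n W) :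
    ∃ Z : Set (Fin n × ZMod 3), W ⊆ Z ∧
      (∀ i : Fin n, (Z ∩ {v | v.1 = i}).ncard = 1) ∧
      ¬ condA n Z ∧ ¬ condB n Z ∧ ¬ condC n Z :=
  extend_to_full_transversal_general n W ha hb hc
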